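/- arXiv:1811.00471 — 4 statements merged into one kernel-verified Lean document; each statement's English description precedes it below -/
import Mathlib

section
/- Let β₀, P, H, V > 0 and let w be real. For any constant speed v with 0 < v < V and positions x_I < x_F, the energy integral splits exactly into a maximum-speed part and a residual part: ∫₀^{(x_F−x_I)/v} β₀P/((x_I + v·t − w)² + H²) dt = ∫₀^{(x_F−x_I)/V} β₀P/((x_I + V·t₁ − w)² + H²) dt₁ + ∫₀^{(x_F−x_I)/v − (x_F−x_I)/V} β₀P/((x_I + (V·v/(V−v))·t₂ − w)² + H²) dt₂. -/
/-! Traversing `[a, a + L]` at constant speed `c` turns any position-dependent integrand into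
`c⁻¹` times its integral over `[a, a + L]` in space. Since `v⁻¹ = V⁻¹ + (V v / (V - v))⁻¹`, the
time integrals at these speeds therefore add up, whatever the received power profile is. -/

open intervalIntegral

variable {E : Type*} [NormedAddCommGroup E] [NormedSpace ℝ E]

theorem intervalIntegral.integral_comp_add_mul_div (f : ℝ → E) {c : ℝ} (hc : c ≠ 0) (a L : ℝ) :
    ∫ t in (0:ℝ)..(L / c), f (a + c * t) = c⁻¹ • ∫ x in a..(a + L), f x := by
  rw [integral_comp_add_mul f hc a, mul_zero, add_zero, mul_div_cancel₀ _ hc]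

theorem inv_mul_div_sub_eq_inv_sub_inv {V v : ℝ} (hV : V ≠ 0) (hv : v ≠ 0) (hvV : V - v ≠ 0) :
    (V * v / (V - v))⁻¹ = v⁻¹ - V⁻¹ := by
  field_simp

theorem intervalIntegral.integral_comp_add_mul_split (f : ℝ → E) {v V s : ℝ} (hv : v ≠ 0)
    (hV : V ≠ 0) (hs : s⁻¹ = v⁻¹ - V⁻¹) (a L : ℝ) :
    ∫ t in (0:ℝ)..(L / v), f (a + v * t) =
      (∫ t in (0:ℝ)..(L / V), f (a + V * t)) + ∫ t in (0:ℝ)..(L / v - L / V), f (a + s * t) := by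
  rcases eq_or_ne s 0 with rfl | hs₀
  · obtain rfl : v = V := inv_injective (by linear_combination -hs)
    simp
  have hduration : L / v - L / V = L / s := by
    rw [div_eq_mul_inv L s, hs]
    ring
  rw [hduration, integral_comp_add_mul_div f hv, integral_comp_add_mul_div f hV,
    integral_comp_add_mul_div f hs₀, ← add_smul, hs, add_sub_cancel]

theorem stmt1_general (β₀ P H w V v xI xF : ℝ)
    (hV : 0 < V) (hv : 0 < v) (hvV : v < V) :
    ∫ t in (0:ℝ)..((xF - xI) / v), β₀ * P / ((xI + v * t - w) ^ 2 + H ^ 2) =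
      (∫ t₁ in (0:ℝ)..((xF - xI) / V),
          β₀ * P / ((xI + V * t₁ - w) ^ 2 + H ^ 2)) +
      ∫ t₂ in (0:ℝ)..((xF - xI) / v - (xF - xI) / V),
          β₀ * P / ((xI + (V * v / (V - v)) * t₂ - w) ^ 2 + H ^ 2) :=
  integral_comp_add_mul_split (fun x => β₀ * P / ((x - w) ^ 2 + H ^ 2)) hv.ne' hV.ne'
    (inv_mul_div_sub_eq_inv_sub_inv hV.ne' hv.ne' (sub_pos.mpr hvV).ne') xI (xF - xI)

theorem stmt1 (β₀ P H w V v xI xF : ℝ) (hβ : 0 < β₀) (hP : 0 < P) (hH : 0 < H)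
    (hV : 0 < V) (hv : 0 < v) (hvV : v < V) (hx : xI < xF) :
    ∫ t in (0:ℝ)..((xF - xI) / v), β₀ * P / ((xI + v * t - w) ^ 2 + H ^ 2) =
      (∫ t₁ in (0:ℝ)..((xF - xI) / V),
          β₀ * P / ((xI + V * t₁ - w) ^ 2 + H ^ 2)) +
      ∫ t₂ in (0:ℝ)..((xF - xI) / v - (xF - xI) / V),
          β₀ * P / ((xI + (V * v / (V - v)) * t₂ - w) ^ 2 + H ^ 2) :=
  stmt1_general β₀ P H w V v xI xF hV hv hvV
end

section
/- Let F(x) = Σ_{k=1}^K λ_k/((x − w_k)² + H²) with H > 0, λ_k ≥ 0 not all zero, and w₁,…,w_K ∈ ℝ. On any closed interval [a, b], the set of maximizers of F on [a, b] is finite, and its cardinality is at most 2K + 1. -/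
open Polynomial Finset

theorem stmt4 (K : ℕ) (H : ℝ) (hH : 0 < H) (w : Fin K → ℝ)
    (lam : Fin K → ℝ) (hlam : ∀ k, 0 ≤ lam k) (hpos : ∃ k, 0 < lam k)
    (F : ℝ → ℝ) (hF : F = fun x => ∑ k, lam k / ((x - w k) ^ 2 + H ^ 2))
    (a b : ℝ) :
    {x ∈ Set.Icc a b | ∀ y ∈ Set.Icc a b, F y ≤ F x}.Finite ∧
    {x ∈ Set.Icc a b | ∀ y ∈ Set.Icc a b, F y ≤ F x}.ncard ≤ 2 * K + 1 := by
  set S := {x ∈ Set.Icc a b | ∀ y ∈ Set.Icc a b, F y ≤ F x} with hS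
  rcases Set.eq_empty_or_nonempty S with hSe | ⟨x₀, hx₀⟩
  · rw [hSe]
    exact ⟨Set.finite_empty, by simp⟩
  obtain ⟨k₀, hk₀⟩ := hpos
  have hK : 0 < K := k₀.pos
  -- positive denominators
  have hd : ∀ x (k : Fin K), 0 < (x - w k) ^ 2 + H ^ 2 := fun x k =>
    add_pos_of_nonneg_of_pos (sq_nonneg _) (pow_pos hH 2)
  set c := F x₀ with hc
  have hcpos : 0 < c := by
    rw [hc, hF]
    exact Finset.sum_pos' (fun k _ => div_nonneg (hlam k) (hd x₀ k).le)
      ⟨k₀, Finset.mem_univ k₀, div_pos hk₀ (hd x₀ k₀)⟩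
  -- polynomials
  set Q : Polynomial ℝ := ∏ k, ((X - C (w k)) ^ 2 + C (H ^ 2)) with hQ
  set P : Polynomial ℝ := ∑ k, C (lam k) *
      ∏ j ∈ Finset.univ.erase k, ((X - C (w j)) ^ 2 + C (H ^ 2)) with hP
  have hfac_monic : ∀ k : Fin K, ((X - C (w k)) ^ 2 + C (H ^ 2)).Monic := by
    intro k
    apply Polynomial.Monic.add_of_left ((monic_X_sub_C (w k)).pow 2)
    rw [Polynomial.degree_pow, Polynomial.degree_X_sub_C]
    exact lt_of_le_of_lt (Polynomial.degree_C_le) (by norm_num)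
  have hfac_deg : ∀ k : Fin K, ((X - C (w k)) ^ 2 + C (H ^ 2)).natDegree = 2 := by
    intro k
    compute_degree!
  have hQmonic : Q.Monic := Polynomial.monic_prod_of_monic _ _ fun k _ => hfac_monic k
  have hQdeg : Q.natDegree = 2 * K := by
    rw [hQ, Polynomial.natDegree_prod_of_monic _ _ fun k _ => hfac_monic k]
    calc ∑ k : Fin K, ((X - C (w k)) ^ 2 + C (H ^ 2)).natDegree
        = ∑ _k : Fin K, 2 := Finset.sum_congr rfl fun j _ => hfac_deg j
      _ = 2 * K := by simp [mul_comm]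
  have hPdeg : P.natDegree < 2 * K := by
    apply lt_of_le_of_lt (Polynomial.natDegree_sum_le _ _)
    rw [Finset.fold_max_lt]
    constructor
    · omega
    intro k _
    calc (C (lam k) * ∏ j ∈ Finset.univ.erase k,
          ((X - C (w j)) ^ 2 + C (H ^ 2))).natDegree
        ≤ (∏ j ∈ Finset.univ.erase k, ((X - C (w j)) ^ 2 + C (H ^ 2))).natDegree :=
          Polynomial.natDegree_C_mul_le _ _
      _ ≤ ∑ j ∈ Finset.univ.erase k, ((X - C (w j)) ^ 2 + C (H ^ 2)).natDegree :=
          Polynomial.natDegree_prod_le _ _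
      _ = ∑ _j ∈ Finset.univ.erase k, 2 := Finset.sum_congr rfl fun j _ => hfac_deg j
      _ = 2 * (K - 1) := by
          rw [Finset.sum_const, Finset.card_erase_of_mem (Finset.mem_univ k)]
          simp [mul_comm, Finset.card_univ]
      _ < 2 * K := by omega
  -- evaluations
  have hQev : ∀ x, Q.eval x = ∏ k, ((x - w k) ^ 2 + H ^ 2) := by
    intro x; simp [hQ, Polynomial.eval_prod]
  have hPev : ∀ x, P.eval x = ∑ k, lam k *
      ∏ j ∈ Finset.univ.erase k, ((x - w j) ^ 2 + H ^ 2) := by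
    intro x; simp [hP, Polynomial.eval_finset_sum, Polynomial.eval_prod]
  have hFQ : ∀ x, F x * Q.eval x = P.eval x := by
    intro x
    rw [hF, hQev, hPev, Finset.sum_mul]
    apply Finset.sum_congr rfl
    intro k _
    rw [← Finset.mul_prod_erase Finset.univ _ (Finset.mem_univ k)]
    have h0 := (hd x k).ne'
    field_simp
  -- key polynomial
  set p : Polynomial ℝ := P - C c * Q with hp
  have hpne : p ≠ 0 := by
    intro h
    have hco : p.coeff (2 * K) = -c := by
      rw [hp, Polynomial.coeff_sub, Polynomial.coeff_C_mul,
        Polynomial.coeff_eq_zero_of_natDegree_lt hPdeg, ← hQdeg,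
        hQmonic.coeff_natDegree]
      ring
    rw [h] at hco
    simp at hco
    exact absurd hco.symm hcpos.ne
  have hpdeg : p.natDegree ≤ 2 * K := by
    apply le_trans (Polynomial.natDegree_sub_le _ _)
    apply max_le hPdeg.le
    apply le_trans (Polynomial.natDegree_C_mul_le _ _)
    exact hQdeg.le
  have hsub : S ⊆ ↑p.roots.toFinset := by
    intro x hx
    have hxm : x ∈ Set.Icc a b := hx.1
    have hfx : F x = c := le_antisymm (hx₀.2 x hxm) (hx.2 x₀ hx₀.1)
    have hroot : p.eval x = 0 := by
      rw [hp]
      simp only [Polynomial.eval_sub, Polynomial.eval_mul, Polynomial.eval_C]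
      rw [← hFQ x, hfx]
      ring
    simp only [Multiset.mem_toFinset, Finset.coe_sort_coe, Finset.mem_coe]
    rw [Polynomial.mem_roots hpne]
    exact hroot
  have hfin : S.Finite := Set.Finite.subset (Finset.finite_toSet _) hsub
  refine ⟨hfin, ?_⟩
  calc S.ncard ≤ (↑p.roots.toFinset : Set ℝ).ncard :=
        Set.ncard_le_ncard hsub (Finset.finite_toSet _)
    _ = p.roots.toFinset.card := Set.ncard_coe_finset _
    _ ≤ Multiset.card p.roots := Multiset.toFinset_card_le _
    _ ≤ p.natDegree := Polynomial.card_roots' p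
    _ ≤ 2 * K := hpdeg
    _ ≤ 2 * K + 1 := by omega
end

section
/- Let Q_k(x) = β₀P/((x − w_k)² + H²) for k = 1,…,K with β₀, P, H > 0, and T > 0. Consider the speed-free problem: maximize min_k ∫₀^T Q_k(x(t)) dt over all measurable x : [0,T] → [w₁, w_K]. Its optimal value equals the optimal value of the finite-dimensional problem: maximize min_k Σ_{i} τ_i·Q_k(x̂_i) over finitely many points x̂_i ∈ [w₁, w_K] and durations τ_i ≥ 0 with Σ_i τ_i = T, where at most K + 1 points suffice. -/
/-!
A trajectory enters the objective only through its energy vector `(∫ Q_k (x t) dt)_k`, which is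
`T` times the average of the curve `y ↦ (Q_k y)_k` along the trajectory. That average lies in the
convex hull of the (compact) image of `[w₁, w_K]`, which is closed, so by Carathéodory it is a
convex combination of `K + 2` points of the curve: hovering at those points for the corresponding
fractions of `T` gives the same energy vector. Conversely every hovering schedule is realised by a
measurable step trajectory. Hence the two sets of attainable values coincide.
-/

open MeasureTheory Set Module Interval

section Caratheodory

variable {E : Type*} [AddCommGroup E] [Module ℝ E] [FiniteDimensional ℝ E]

theorem exists_fin_convexCombination_of_mem_convexHull {n : ℕ} (hn : finrank ℝ E < n)
    {s : Set E} {x : E} (hx : x ∈ convexHull ℝ s) :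
    ∃ (w : Fin n → ℝ) (z : Fin n → E), w ∈ stdSimplex ℝ (Fin n) ∧ (∀ i, z i ∈ s) ∧
      ∑ i, w i • z i = x := by
  obtain ⟨ι, _, z, w, hzs, hz, hw0, hw1, hwz⟩ := eq_pos_convex_span_of_mem_convexHull hx
  obtain ⟨z₀, hz₀⟩ := convexHull_nonempty_iff.1 ⟨x, hx⟩
  have hcard : Fintype.card ι ≤ Fintype.card (Fin n) := by
    have := hz.card_le_finrank_succ.trans (Nat.add_le_add_right (Submodule.finrank_le _) 1)
    simp only [Fintype.card_fin]
    omega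
  obtain ⟨e⟩ := Function.Embedding.nonempty_of_card_le hcard
  refine ⟨Function.extend e w 0, Function.extend e z fun _ => z₀, ⟨fun i => ?_, ?_⟩,
    fun i => ?_, ?_⟩
  · by_cases hi : i ∈ range e
    · obtain ⟨j, rfl⟩ := hi
      rw [e.injective.extend_apply]
      exact (hw0 j).le
    · rw [Function.extend_apply' _ _ _ hi]; rfl
  · rw [← hw1]
    exact (Fintype.sum_of_injective e e.injective _ _
      (fun i hi => by rw [Function.extend_apply' _ _ _ hi]; rfl)
      (fun j => (e.injective.extend_apply _ _ _).symm)).symm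
  · by_cases hi : i ∈ range e
    · obtain ⟨j, rfl⟩ := hi
      rw [e.injective.extend_apply]
      exact hzs (mem_range_self j)
    · rw [Function.extend_apply' _ _ _ hi]; exact hz₀
  · rw [← hwz]
    exact (Fintype.sum_of_injective e e.injective _ _
      (fun i hi => by rw [Function.extend_apply' _ _ _ hi]; simp)
      (fun j => by simp only [e.injective.extend_apply])).symm

theorem convexHull_eq_image_stdSimplex_pi {n : ℕ} (hn : finrank ℝ E < n) (s : Set E) :
    convexHull ℝ s = (fun p : (Fin n → ℝ) × (Fin n → E) => ∑ i, p.1 i • p.2 i) ''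
      (stdSimplex ℝ (Fin n) ×ˢ univ.pi fun _ => s) := by
  refine Subset.antisymm (fun x hx => ?_) ?_
  · obtain ⟨w, z, hw, hz, rfl⟩ := exists_fin_convexCombination_of_mem_convexHull hn hx
    exact ⟨(w, z), ⟨hw, fun i _ => hz i⟩, rfl⟩
  · rintro _ ⟨⟨w, z⟩, ⟨hw, hz⟩, rfl⟩
    exact (convex_convexHull ℝ s).sum_mem (fun i _ => hw.1 i) hw.2
      fun i _ => subset_convexHull ℝ s (hz i (mem_univ i))

theorem IsCompact.convexHull_of_finiteDimensional [TopologicalSpace E] [IsTopologicalAddGroup E]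
    [ContinuousSMul ℝ E] {s : Set E} (hs : IsCompact s) : IsCompact (convexHull ℝ s) := by
  rw [convexHull_eq_image_stdSimplex_pi (Nat.lt_succ_self _)]
  exact ((isCompact_stdSimplex ℝ _).prod (isCompact_univ_pi fun _ => hs)).image (by fun_prop)

end Caratheodory

section Occupation

variable {α F : Type*} [MeasurableSpace α] {μ : Measure α} [IsFiniteMeasure μ]
  [NormedAddCommGroup F] {s : Set F} {g : α → F}

theorem MeasureTheory.Integrable.of_ae_mem_isCompact (hs : IsCompact s)
    (hg : AEStronglyMeasurable g μ) (hgs : ∀ᵐ a ∂μ, g a ∈ s) : Integrable g μ :=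
  let ⟨C, hC⟩ := hs.isBounded.exists_norm_le
  .of_bound hg C (hgs.mono fun _ ha => hC _ ha)

theorem exists_fin_sum_smul_eq_integral [NeZero μ] [NormedSpace ℝ F] [FiniteDimensional ℝ F]
    {n : ℕ} (hn : finrank ℝ F < n) (hs : IsCompact s) (hg : AEStronglyMeasurable g μ)
    (hgs : ∀ᵐ a ∂μ, g a ∈ s) :
    ∃ (τ : Fin n → ℝ) (z : Fin n → F), (∀ i, 0 ≤ τ i) ∧ ∑ i, τ i = μ.real univ ∧
      (∀ i, z i ∈ s) ∧ ∫ a, g a ∂μ = ∑ i, τ i • z i := by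
  have havg : ⨍ a, g a ∂μ ∈ convexHull ℝ s :=
    (convex_convexHull ℝ s).average_mem hs.convexHull_of_finiteDimensional.isClosed
      (hgs.mono fun _ ha => subset_convexHull ℝ s ha) (.of_ae_mem_isCompact hs hg hgs)
  obtain ⟨w, z, hw, hz, hwz⟩ := exists_fin_convexCombination_of_mem_convexHull hn havg
  refine ⟨fun i => μ.real univ * w i, z, fun i => mul_nonneg measureReal_nonneg (hw.1 i),
    by rw [← Finset.mul_sum, hw.2, mul_one], hz, ?_⟩
  rw [← measure_smul_average, ← hwz, Finset.smul_sum]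
  simp only [mul_smul]

end Occupation

theorem exists_step_function_intervalIntegral_eq {α : Type*} [MeasurableSpace α] :
    ∀ {n : ℕ} (xhat : Fin (n + 1) → α) (τ : Fin (n + 1) → ℝ), (∀ i, 0 ≤ τ i) → ∀ a : ℝ,
    ∃ x : ℝ → α, Measurable x ∧ (∀ t, x t ∈ range xhat) ∧ ∀ g : α → ℝ,
      IntervalIntegrable (g ∘ x) volume a (a + ∑ i, τ i) ∧
      ∫ t in a..a + ∑ i, τ i, g (x t) = ∑ i, τ i * g (xhat i)
  | 0, xhat, τ, _, a => ⟨fun _ => xhat 0, measurable_const, fun _ => mem_range_self 0,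
      fun g => ⟨intervalIntegrable_const, by simp⟩⟩
  | n + 1, xhat, τ, hτ, a => by
    obtain ⟨y, hym, hyr, hy⟩ := exists_step_function_intervalIntegral_eq
      (fun i => xhat i.succ) (fun i => τ i.succ) (fun i => hτ _) (a + τ 0)
    set b := a + τ 0
    set c := b + ∑ i : Fin (n + 1), τ i.succ
    have hab : a ≤ b := le_add_of_nonneg_right (hτ 0)
    have hbc : b ≤ c := le_add_of_nonneg_right (Finset.sum_nonneg fun i _ => hτ _)
    have hac : a + ∑ i, τ i = c := by rw [Fin.sum_univ_succ, ← add_assoc]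
    refine ⟨fun t => if t ≤ b then xhat 0 else y t,
      measurable_const.ite measurableSet_Iic hym, fun t => ?_, fun g => ?_⟩
    · dsimp only
      split_ifs
      · exact mem_range_self 0
      · obtain ⟨i, hi⟩ := hyr t
        exact ⟨i.succ, hi⟩
    · obtain ⟨hyi, hyeq⟩ := hy g
      have hfirst : EqOn (fun _ => g (xhat 0)) (fun t => g (if t ≤ b then xhat 0 else y t))
          (Ι a b) := fun t ht => by simp [((uIoc_of_le hab) ▸ ht).2]
      have hsecond : EqOn (g ∘ y) (fun t => g (if t ≤ b then xhat 0 else y t)) (Ι b c) :=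
        fun t ht => by simp [not_le.2 ((uIoc_of_le hbc) ▸ ht).1]
      have hi₁ := intervalIntegrable_const.congr (μ := volume) hfirst
      have hi₂ := hyi.congr hsecond
      refine ⟨hac ▸ hi₁.trans hi₂, ?_⟩
      rw [hac, ← intervalIntegral.integral_add_adjacent_intervals hi₁ hi₂,
        ← intervalIntegral.integral_congr_ae (.of_forall fun t => hfirst (x := t)),
        ← intervalIntegral.integral_congr_ae (.of_forall fun t => hsecond (x := t)),
        intervalIntegral.integral_const, Function.comp_def, hyeq,
        Fin.sum_univ_succ (n := n + 1)]
      simp [b]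

theorem exists_fin_sum_eq_intervalIntegral_of_mem_isCompact {β : Type*} [TopologicalSpace β]
    [MeasurableSpace β] [OpensMeasurableSpace β] {m : ℕ} {Q : Fin m → β → ℝ}
    (hQ : ∀ k, Continuous (Q k)) {s : Set β} (hs : IsCompact s) {x : ℝ → β}
    (hx : Measurable x) (hxs : ∀ t, x t ∈ s) {a b : ℝ} (hab : a < b) :
    ∃ (xhat : Fin (m + 1) → β) (τ : Fin (m + 1) → ℝ), (∀ i, xhat i ∈ s) ∧ (∀ i, 0 ≤ τ i) ∧
      ∑ i, τ i = b - a ∧ ∀ k, ∫ t in a..b, Q k (x t) = ∑ i, τ i * Q k (xhat i) := by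
  set μ := volume.restrict (Ioc a b)
  have : NeZero μ := ⟨by simp [μ, hab]⟩
  set F : β → Fin m → ℝ := fun y k => Q k y
  have hF : Continuous F := continuous_pi hQ
  have hFx : AEStronglyMeasurable (fun t => F (x t)) μ :=
    (hF.measurable.comp hx).aestronglyMeasurable
  have hFs : ∀ᵐ t ∂μ, F (x t) ∈ F '' s := .of_forall fun t => mem_image_of_mem F (hxs t)
  obtain ⟨τ, z, hτ, hsum, hz, heq⟩ :=
    exists_fin_sum_smul_eq_integral (n := m + 1) (by simp) (hs.image hF) hFx hFs
  choose xhat hxhat hFxhat using hz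
  refine ⟨xhat, τ, hxhat, hτ, by simpa [μ, hab.le] using hsum, fun k => ?_⟩
  have hk := congrFun heq k
  rw [eval_integral (Integrable.eval (.of_ae_mem_isCompact (hs.image hF) hFx hFs))] at hk
  simpa [intervalIntegral.integral_of_le hab.le, ← hFxhat, F] using hk

theorem stmt16_general (K : ℕ) (β₀ P H T : ℝ) (hH : 0 < H)
    (hT : 0 < T) (w : Fin (K + 1) → ℝ)
    (Q : Fin (K + 1) → ℝ → ℝ)
    (hQ : Q = fun k x => β₀ * P / ((x - w k) ^ 2 + H ^ 2)) :
    sSup {E : ℝ | ∃ x : ℝ → ℝ, Measurable x ∧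
        (∀ t, x t ∈ Set.Icc (w 0) (w (Fin.last K))) ∧
        E = ⨅ k, ∫ t in (0:ℝ)..T, Q k (x t)} =
    sSup {E : ℝ | ∃ xhat : Fin (K + 2) → ℝ, ∃ τ : Fin (K + 2) → ℝ,
        (∀ i, xhat i ∈ Set.Icc (w 0) (w (Fin.last K))) ∧
        (∀ i, 0 ≤ τ i) ∧ (∑ i, τ i = T) ∧
        E = ⨅ k, ∑ i, τ i * Q k (xhat i)} := by
  have hQc : ∀ k, Continuous (Q k) := fun k => hQ ▸
    continuous_const.div (by fun_prop) fun x => by positivity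
  congr 1
  ext E
  constructor
  · rintro ⟨x, hxm, hxI, rfl⟩
    obtain ⟨xhat, τ, hxhat, hτ, hsum, hQx⟩ :=
      exists_fin_sum_eq_intervalIntegral_of_mem_isCompact hQc isCompact_Icc hxm hxI hT
    exact ⟨xhat, τ, hxhat, hτ, by simpa using hsum, by simp_rw [hQx]⟩
  · rintro ⟨xhat, τ, hxhat, hτ, hsum, rfl⟩
    obtain ⟨x, hxm, hxr, hx⟩ := exists_step_function_intervalIntegral_eq xhat τ hτ 0
    refine ⟨x, hxm, fun t => ?_, ?_⟩
    · obtain ⟨i, hi⟩ := hxr t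
      exact hi ▸ hxhat i
    · simp_rw [← (hx (Q _)).2, zero_add, hsum]

theorem stmt16 (K : ℕ) (β₀ P H T : ℝ) (hβ : 0 < β₀) (hP : 0 < P) (hH : 0 < H)
    (hT : 0 < T) (w : Fin (K + 1) → ℝ) (hw : Monotone w)
    (Q : Fin (K + 1) → ℝ → ℝ)
    (hQ : Q = fun k x => β₀ * P / ((x - w k) ^ 2 + H ^ 2)) :
    sSup {E : ℝ | ∃ x : ℝ → ℝ, Measurable x ∧
        (∀ t, x t ∈ Set.Icc (w 0) (w (Fin.last K))) ∧
        E = ⨅ k, ∫ t in (0:ℝ)..T, Q k (x t)} =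
    sSup {E : ℝ | ∃ xhat : Fin (K + 2) → ℝ, ∃ τ : Fin (K + 2) → ℝ,
        (∀ i, xhat i ∈ Set.Icc (w 0) (w (Fin.last K))) ∧
        (∀ i, 0 ≤ τ i) ∧ (∑ i, τ i = T) ∧
        E = ⨅ k, ∑ i, τ i * Q k (xhat i)} :=
  stmt16_general K β₀ P H T hH hT w Q hQ
end

section
/- Let λ₁, λ₂ > 0, H > 0 and w₁ < w₂. Define F(x) = λ₁/((x − w₁)² + H²) + λ₂/((x − w₂)² + H²). If w₂ − w₁ ≤ 2H/√3 and λ₁ = λ₂, then F has a unique global maximizer on ℝ, namely the midpoint x = (w₁ + w₂)/2. -/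
theorem stmt18 (lam₁ lam₂ H w₁ w₂ : ℝ) (h1 : 0 < lam₁) (h2 : 0 < lam₂)
    (hH : 0 < H) (hw : w₁ < w₂) (hclose : w₂ - w₁ ≤ 2 * H / Real.sqrt 3)
    (heq : lam₁ = lam₂)
    (F : ℝ → ℝ)
    (hF : F = fun x => lam₁ / ((x - w₁) ^ 2 + H ^ 2) +
      lam₂ / ((x - w₂) ^ 2 + H ^ 2)) :
    (∀ x : ℝ, F x ≤ F ((w₁ + w₂) / 2)) ∧
    ∀ x : ℝ, (∀ y : ℝ, F y ≤ F x) → x = (w₁ + w₂) / 2 := by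
  subst heq
  have hFx : ∀ x : ℝ, F x = lam₁ / ((x - w₁) ^ 2 + H ^ 2) +
      lam₁ / ((x - w₂) ^ 2 + H ^ 2) := by
    intro x; rw [hF]
  set m : ℝ := (w₁ + w₂) / 2 with hm
  have h3 : 3 * ((w₂ - w₁) / 2) ^ 2 ≤ H ^ 2 := by
    have hs3 : (0:ℝ) < Real.sqrt 3 := by positivity
    have hsq : Real.sqrt 3 ^ 2 = 3 := Real.sq_sqrt (by norm_num)
    have h1' : Real.sqrt 3 * (w₂ - w₁) ≤ 2 * H := by
      rw [le_div_iff₀ hs3] at hclose; nlinarith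
    nlinarith [sq_nonneg (w₂ - w₁), mul_nonneg hs3.le (sub_nonneg.mpr hw.le)]
  have key : ∀ x : ℝ, x ≠ m → F x < F m := by
    intro x hx
    rw [hFx, hFx]
    have hD1 : 0 < (x - w₁) ^ 2 + H ^ 2 := by positivity
    have hD2 : 0 < (x - w₂) ^ 2 + H ^ 2 := by positivity
    have hA1 : 0 < (m - w₁) ^ 2 + H ^ 2 := by positivity
    have hA2 : 0 < (m - w₂) ^ 2 + H ^ 2 := by positivity
    have hxm : x - (w₁ + w₂) / 2 ≠ 0 := by rw [← hm]; exact sub_ne_zero.mpr hx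
    have ht : 0 < (x - (w₁ + w₂) / 2) ^ 2 := by positivity
    have hpos : 0 < (x - (w₁ + w₂) / 2) ^ 2 + H ^ 2 - 3 * ((w₂ - w₁) / 2) ^ 2 := by nlinarith
    rw [div_add_div _ _ (ne_of_gt hD1) (ne_of_gt hD2),
        div_add_div _ _ (ne_of_gt hA1) (ne_of_gt hA2),
        div_lt_div_iff₀ (by positivity) (by positivity)]
    have hfact : 0 < lam₁ * (((w₂ - w₁) / 2) ^ 2 + H ^ 2) *
        ((x - (w₁ + w₂) / 2) ^ 2 * ((x - (w₁ + w₂) / 2) ^ 2 + H ^ 2 - 3 * ((w₂ - w₁) / 2) ^ 2)) := by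
      have := mul_pos ht hpos
      positivity
    have hmw₁ : m - w₁ = (w₂ - w₁) / 2 := by rw [hm]; ring
    have hmw₂ : m - w₂ = -((w₂ - w₁) / 2) := by rw [hm]; ring
    rw [hmw₁, hmw₂]
    nlinarith [hfact]
  constructor
  · intro x
    by_cases hx : x = m
    · rw [hx]
    · exact (key x hx).le
  · intro x hxmax
    by_contra hx
    have h1 := key x hx
    have h2 := hxmax m
    linarith
end
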